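/- arXiv:1505.05109 — 2 statements merged into one kernel-verified Lean document; each statement's English description precedes it below -/
import Mathlib

section
/- Let (G,M,I) be a finite context with ∅'' = ∅ and let T be a set of nonempty box extents of (G,M,I). Then T is a maximal classification tree in the box extent lattice B(G,M,I) if and only if T is a maximal complete classification tree in the lattice of extents of (G,M,I), i.e., a complete classification tree that is not properly contained in any other complete classification tree. -/
open Set

variable {G M : Type*}

/-- The attribute-derivation `A'` of a set of objects (the restricted relation of a
subcontext agrees with `I` on its object set, so no restriction is needed here). -/
def polarUp (I : G → M → Prop) (A : Set G) : Set M := {m | ∀ g ∈ A, I g m}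

/-- The object-derivation `B'` of a set of attributes, computed in the subcontext whose
object set is `H` (relation `I ∩ H×M`). -/
def polarDown (I : G → M → Prop) (H : Set G) (B : Set M) : Set G :=
  {g | g ∈ H ∧ ∀ m ∈ B, I g m}

/-- The closure `A''` computed in the subcontext with object set `H`.
Taking `H = Set.univ` gives the closure in the full context `(G,M,I)`. -/
def cl2 (I : G → M → Prop) (H A : Set G) : Set G := polarDown I H (polarUp I A)

/-- `A` is an extent of the subcontext with object set `H`. -/
def IsExtent (I : G → M → Prop) (H A : Set G) : Prop := A ⊆ H ∧ cl2 I H A = A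

/-- An extent partition of the subcontext with object set `H`: a partition of `H`
all of whose classes are extents. -/
def IsExtentPartition (I : G → M → Prop) (H : Set G) (π : Set (Set G)) : Prop :=
  (∀ A ∈ π, A.Nonempty) ∧ π.Pairwise Disjoint ∧ ⋃₀ π = H ∧ ∀ A ∈ π, IsExtent I H A

/-- `E` is a box extent of the subcontext with object set `H`: a class of some extent
partition, or `∅''`. -/
def IsBoxExtent (I : G → M → Prop) (H E : Set G) : Prop :=
  (∃ π : Set (Set G), IsExtentPartition I H π ∧ E ∈ π) ∨ E = cl2 I H ∅

/-- The finest extent partition: every class of every extent partition is a union of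
its classes. -/
def IsFinestExtentPartition (I : G → M → Prop) (H : Set G) (π : Set (Set G)) : Prop :=
  IsExtentPartition I H π ∧
    ∀ σ : Set (Set G), IsExtentPartition I H σ → ∀ A ∈ σ, ∃ S ⊆ π, A = ⋃₀ S

/-- A classification tree in the box extent lattice of the subcontext with object set
`H`: a set of nonempty box extents such that for every nonempty box extent `X`,
`{E ∈ T | X ⊆ E}` is a nonempty chain under inclusion. -/
def IsBoxClassTree (I : G → M → Prop) (H : Set G) (T : Set (Set G)) : Prop :=
  (∀ E ∈ T, E.Nonempty ∧ IsBoxExtent I H E) ∧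
  ∀ X : Set G, X.Nonempty → IsBoxExtent I H X →
    ({E ∈ T | X ⊆ E}.Nonempty ∧ IsChain (· ⊆ ·) {E ∈ T | X ⊆ E})

/-- A maximal classification tree in the box extent lattice. -/
def IsMaxBoxClassTree (I : G → M → Prop) (H : Set G) (T : Set (Set G)) : Prop :=
  IsBoxClassTree I H T ∧ ∀ T' : Set (Set G), IsBoxClassTree I H T' → T ⊆ T' → T' = T

/-- A classification tree in the lattice of extents of the full context `(G,M,I)`:
a set of nonempty extents such that for every nonempty extent `X`, `{E ∈ T | X ⊆ E}`
is a nonempty chain under inclusion. -/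
def IsExtClassTree (I : G → M → Prop) (T : Set (Set G)) : Prop :=
  (∀ E ∈ T, E.Nonempty ∧ IsExtent I Set.univ E) ∧
  ∀ X : Set G, X.Nonempty → IsExtent I Set.univ X →
    ({E ∈ T | X ⊆ E}.Nonempty ∧ IsChain (· ⊆ ·) {E ∈ T | X ⊆ E})

/-- `A` is a maximal antichain of `(T, ⊆)`. -/
def IsMaxAntichainIn (T A : Set (Set G)) : Prop :=
  A ⊆ T ∧ IsAntichain (· ⊆ ·) A ∧
    ∀ B : Set (Set G), B ⊆ T → A ⊆ B → IsAntichain (· ⊆ ·) B → B = A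

/-- A complete classification tree in the lattice of extents: every maximal antichain
of `(T, ⊆)` covers `G`. -/
def IsCompleteExtClassTree (I : G → M → Prop) (T : Set (Set G)) : Prop :=
  IsExtClassTree I T ∧
    ∀ A : Set (Set G), IsMaxAntichainIn T A → ⋃₀ A = Set.univ

/-!
Every object `g` lies in a smallest nonempty box extent, its *box atom*: the intersection of all
classes of extent partitions through `g`. The atoms are themselves the classes of an extent
partition. Consequently, in a classification tree of either kind two members sharing an object are
comparable (both contain the atom of that object, resp. the closure of `{g}`), so on sets of box
extents the two tree notions coincide. A maximal box tree contains every atom; a maximal antichain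
missing an object could absorb the atom of that object, so it covers `G`. Conversely, each member of
a complete tree lies in a maximal antichain, and the laminarity of the tree makes that antichain an
extent partition, so a complete tree consists of box extents.
-/

def IsLaminar (T : Set (Set G)) : Prop :=
  ∀ ⦃E₁⦄, E₁ ∈ T → ∀ ⦃E₂⦄, E₂ ∈ T → (E₁ ∩ E₂).Nonempty → E₁ ⊆ E₂ ∨ E₂ ⊆ E₁

section Laminar

variable {T A : Set (Set G)} {X : Set G}

lemma isLaminar_of_forall_exists_isChain
    (h : ∀ g, ∃ X : Set G, IsChain (· ⊆ ·) {E ∈ T | X ⊆ E} ∧ ∀ E ∈ T, g ∈ E → X ⊆ E) :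
    IsLaminar T := by
  rintro E₁ h₁ E₂ h₂ ⟨g, hg₁, hg₂⟩
  obtain ⟨X, hchain, hX⟩ := h g
  exact hchain.total ⟨h₁, hX E₁ h₁ hg₁⟩ ⟨h₂, hX E₂ h₂ hg₂⟩

lemma IsLaminar.isChain (hT : IsLaminar T) (hX : X.Nonempty) :
    IsChain (· ⊆ ·) {E ∈ T | X ⊆ E} := by
  obtain ⟨x, hx⟩ := hX
  rintro E₁ ⟨h₁, hX₁⟩ E₂ ⟨h₂, hX₂⟩ -
  exact hT h₁ h₂ ⟨x, hX₁ hx, hX₂ hx⟩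

lemma IsLaminar.insert (hT : IsLaminar T) (hX : ∀ E ∈ T, (X ∩ E).Nonempty → X ⊆ E) :
    IsLaminar (insert X T) := by
  rintro E₁ (rfl | h₁) E₂ (rfl | h₂) hne
  · exact Or.inl subset_rfl
  · exact Or.inl (hX E₂ h₂ hne)
  · exact Or.inr (hX E₁ h₁ (inter_comm E₁ E₂ ▸ hne))
  · exact hT h₁ h₂ hne

lemma IsLaminar.pairwise_disjoint_of_isAntichain (hT : IsLaminar T) (hAT : A ⊆ T)
    (hA : IsAntichain (· ⊆ ·) A) : A.Pairwise Disjoint := by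
  intro F₁ h₁ F₂ h₂ hne
  by_contra hint
  rcases hT (hAT h₁) (hAT h₂) (not_disjoint_iff_nonempty_inter.1 hint) with h | h
  exacts [hA h₁ h₂ hne h, hA h₂ h₁ hne.symm h]

lemma exists_isMaxAntichainIn_mem [Finite G] {E : Set G} (hE : E ∈ T) :
    ∃ A, IsMaxAntichainIn T A ∧ E ∈ A := by
  obtain ⟨A, hEA, hA⟩ :=
    (toFinite {B : Set (Set G) | B ⊆ T ∧ IsAntichain (· ⊆ ·) B}).exists_le_maximal
      (a := {E}) ⟨singleton_subset_iff.2 hE, subsingleton_singleton.isAntichain _⟩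
  exact ⟨A, ⟨hA.1.1, hA.1.2, fun B hBT hAB hB => (hA.2 ⟨hBT, hB⟩ hAB).antisymm hAB⟩, hEA rfl⟩

end Laminar

section Context

variable {I : G → M → Prop} {T A : Set (Set G)} {E : Set G}

lemma cl2_univ_eq (S : Set G) : cl2 I univ S = lowerPolar I (upperPolar I S) := by
  ext g
  simp [cl2, polarDown, polarUp, mem_lowerPolar_iff, mem_upperPolar_iff]

lemma isExtent_univ_iff : IsExtent I univ E ↔ Order.IsExtent I E := by
  rw [IsExtent, cl2_univ_eq, Order.isExtent_iff]
  simp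

lemma isExtent_univ_lowerPolar (B : Set M) : IsExtent I univ (lowerPolar I B) :=
  isExtent_univ_iff.2 Order.isExtent_lowerPolar

lemma IsBoxExtent.isExtent (h : IsBoxExtent I univ E) : IsExtent I univ E := by
  rcases h with ⟨π, hπ, hE⟩ | rfl
  · exact hπ.2.2.2 E hE
  · rw [cl2_univ_eq]
    exact isExtent_univ_lowerPolar _

lemma isBoxExtent_univ [Nonempty G] : IsBoxExtent I univ (univ : Set G) := by
  refine Or.inl ⟨{univ}, ⟨?_, pairwise_singleton _ _, sUnion_singleton _, ?_⟩, rfl⟩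
  · rintro _ rfl
    exact univ_nonempty
  · rintro _ rfl
    exact isExtent_univ_iff.2 Order.IsExtent.univ

lemma IsExtentPartition.exists_mem {H : Set G} {π : Set (Set G)}
    (hπ : IsExtentPartition I H π) {g : G} (hg : g ∈ H) : ∃ A ∈ π, g ∈ A := by
  rw [← hπ.2.2.1] at hg
  exact hg

lemma IsExtentPartition.eq_of_mem {H : Set G} {π : Set (Set G)} (hπ : IsExtentPartition I H π)
    {A B : Set G} (hA : A ∈ π) (hB : B ∈ π) {g : G} (hgA : g ∈ A) (hgB : g ∈ B) : A = B := by
  by_contra hne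
  exact disjoint_left.1 (hπ.2.1 hA hB hne) hgA hgB

variable (I) in
def boxAtom (g : G) : Set G :=
  ⋂₀ {A | (∃ π, IsExtentPartition I univ π ∧ A ∈ π) ∧ g ∈ A}

lemma mem_boxAtom {g : G} : g ∈ boxAtom I g := fun _ hA => hA.2

lemma boxAtom_subset_of_mem {π : Set (Set G)} (hπ : IsExtentPartition I univ π) {A : Set G}
    (hA : A ∈ π) {g : G} (hg : g ∈ A) : boxAtom I g ⊆ A :=
  sInter_subset_of_mem ⟨⟨π, hπ, hA⟩, hg⟩

lemma boxAtom_eq_of_mem {g h : G} (hh : h ∈ boxAtom I g) : boxAtom I h = boxAtom I g := by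
  refine subset_antisymm (sInter_subset_sInter fun A hA => ⟨hA.1, hh A hA⟩)
    (sInter_subset_sInter fun A hA => ⟨hA.1, ?_⟩)
  obtain ⟨⟨π, hπ, hAπ⟩, hhA⟩ := hA
  obtain ⟨A₀, hA₀, hgA₀⟩ := hπ.exists_mem (mem_univ g)
  rwa [hπ.eq_of_mem hAπ hA₀ hhA (boxAtom_subset_of_mem hπ hA₀ hgA₀ hh)]

lemma isExtent_boxAtom (g : G) : IsExtent I univ (boxAtom I g) := by
  rw [isExtent_univ_iff, boxAtom, sInter_eq_biInter]
  exact Order.IsExtent.iInter₂ _ fun A ⟨⟨π, hπ, hAπ⟩, _⟩ => isExtent_univ_iff.1 (hπ.2.2.2 A hAπ)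

lemma isExtentPartition_range_boxAtom : IsExtentPartition I univ (range (boxAtom I)) := by
  refine ⟨?_, ?_, eq_univ_of_forall fun g => ⟨_, ⟨g, rfl⟩, mem_boxAtom⟩, ?_⟩
  · rintro _ ⟨g, rfl⟩
    exact ⟨g, mem_boxAtom⟩
  · rintro _ ⟨a, rfl⟩ _ ⟨b, rfl⟩ hne
    exact disjoint_left.2 fun x hxa hxb =>
      hne ((boxAtom_eq_of_mem hxa).symm.trans (boxAtom_eq_of_mem hxb))
  · rintro _ ⟨g, rfl⟩
    exact isExtent_boxAtom g

lemma isBoxExtent_boxAtom (g : G) : IsBoxExtent I univ (boxAtom I g) :=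
  Or.inl ⟨_, isExtentPartition_range_boxAtom, g, rfl⟩

lemma boxAtom_subset_of_inter_nonempty (hempty : cl2 I univ (∅ : Set G) = ∅)
    (hE : IsBoxExtent I univ E) {g : G} (h : (boxAtom I g ∩ E).Nonempty) : boxAtom I g ⊆ E := by
  obtain ⟨x, hxg, hxE⟩ := h
  rcases hE with ⟨π, hπ, hEπ⟩ | rfl
  · rw [← boxAtom_eq_of_mem hxg]
    exact boxAtom_subset_of_mem hπ hEπ hxE
  · rw [hempty] at hxE
    exact hxE.elim

lemma IsBoxClassTree.isLaminar (hempty : cl2 I univ (∅ : Set G) = ∅)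
    (hT : IsBoxClassTree I univ T) : IsLaminar T :=
  isLaminar_of_forall_exists_isChain fun g =>
    ⟨boxAtom I g, (hT.2 _ ⟨g, mem_boxAtom⟩ (isBoxExtent_boxAtom g)).2, fun E hE hg =>
      boxAtom_subset_of_inter_nonempty hempty (hT.1 E hE).2 ⟨g, mem_boxAtom, hg⟩⟩

lemma IsExtClassTree.isLaminar (hT : IsExtClassTree I T) : IsLaminar T :=
  isLaminar_of_forall_exists_isChain fun g =>
    ⟨lowerPolar I (upperPolar I {g}),
      (hT.2 _ ⟨g, subset_lowerPolar_upperPolar I {g} rfl⟩ (isExtent_univ_lowerPolar _)).2,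
      fun E hE hg => (isExtent_univ_iff.1 (hT.1 E hE).2).lowerPolar_upperPolar_subset
        (singleton_subset_iff.2 hg)⟩

lemma IsBoxClassTree.univ_mem [Nonempty G] (hT : IsBoxClassTree I univ T) : univ ∈ T := by
  obtain ⟨E, hE, hsub⟩ := (hT.2 univ univ_nonempty isBoxExtent_univ).1
  rwa [univ_subset_iff.1 hsub] at hE

lemma IsBoxClassTree.isExtClassTree (hempty : cl2 I univ (∅ : Set G) = ∅)
    (hT : IsBoxClassTree I univ T) : IsExtClassTree I T := by
  refine ⟨fun E hE => ⟨(hT.1 E hE).1, (hT.1 E hE).2.isExtent⟩, fun X hX _ => ?_⟩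
  have : Nonempty G := ⟨hX.some⟩
  exact ⟨⟨univ, hT.univ_mem, subset_univ X⟩, (hT.isLaminar hempty).isChain hX⟩

lemma IsExtClassTree.isBoxClassTree (hT : IsExtClassTree I T)
    (hbox : ∀ E ∈ T, IsBoxExtent I univ E) : IsBoxClassTree I univ T :=
  ⟨fun E hE => ⟨(hT.1 E hE).1, hbox E hE⟩, fun X hX hXbox => hT.2 X hX hXbox.isExtent⟩

lemma IsMaxBoxClassTree.boxAtom_mem (hempty : cl2 I univ (∅ : Set G) = ∅)
    (hT : IsMaxBoxClassTree I univ T) (g : G) : boxAtom I g ∈ T := by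
  have hlam : IsLaminar (insert (boxAtom I g) T) :=
    (hT.1.isLaminar hempty).insert fun E hE =>
      boxAtom_subset_of_inter_nonempty hempty (hT.1.1 E hE).2
  have htree : IsBoxClassTree I univ (insert (boxAtom I g) T) := by
    refine ⟨?_, fun X hX hXbox => ⟨?_, hlam.isChain hX⟩⟩
    · rintro E (rfl | hE)
      exacts [⟨⟨g, mem_boxAtom⟩, isBoxExtent_boxAtom g⟩, hT.1.1 E hE]
    · obtain ⟨E, hE, hXE⟩ := (hT.1.2 X hX hXbox).1
      exact ⟨E, mem_insert_of_mem _ hE, hXE⟩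
  exact hT.2 _ htree (subset_insert _ _) ▸ mem_insert _ _

lemma IsMaxBoxClassTree.sUnion_eq_univ (hempty : cl2 I univ (∅ : Set G) = ∅)
    (hT : IsMaxBoxClassTree I univ T) (hA : IsMaxAntichainIn T A) : ⋃₀ A = univ := by
  obtain ⟨hAT, hanti, hmax⟩ := hA
  refine eq_univ_of_forall fun g => ?_
  by_contra hg
  have hdisj : ∀ F ∈ A, ¬(boxAtom I g ∩ F).Nonempty := fun F hF hne =>
    hg ⟨F, hF, boxAtom_subset_of_inter_nonempty hempty (hT.1.1 F (hAT hF)).2 hne mem_boxAtom⟩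
  have hins : IsAntichain (· ⊆ ·) (insert (boxAtom I g) A) := by
    refine hanti.insert (fun F hF _ hFg => ?_) fun F hF _ hgF =>
      hdisj F hF ⟨g, mem_boxAtom, hgF mem_boxAtom⟩
    obtain ⟨x, hx⟩ := (hT.1.1 F (hAT hF)).1
    exact hdisj F hF ⟨x, hFg hx, hx⟩
  have hgA := hmax _ (insert_subset (hT.boxAtom_mem hempty g) hAT) (subset_insert _ _) hins
  exact hdisj _ (hgA ▸ mem_insert _ _) ⟨g, mem_boxAtom, mem_boxAtom⟩

lemma IsMaxBoxClassTree.isCompleteExtClassTree (hempty : cl2 I univ (∅ : Set G) = ∅)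
    (hT : IsMaxBoxClassTree I univ T) : IsCompleteExtClassTree I T :=
  ⟨hT.1.isExtClassTree hempty, fun _ hA => hT.sUnion_eq_univ hempty hA⟩

lemma IsCompleteExtClassTree.isBoxExtent [Finite G] (hT : IsCompleteExtClassTree I T)
    (hE : E ∈ T) : IsBoxExtent I univ E := by
  obtain ⟨A, hA, hEA⟩ := exists_isMaxAntichainIn_mem hE
  refine Or.inl ⟨A, ⟨fun F hF => (hT.1.1 F (hA.1 hF)).1,
    hT.1.isLaminar.pairwise_disjoint_of_isAntichain hA.1 hA.2.1, hT.2 A hA,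
    fun F hF => (hT.1.1 F (hA.1 hF)).2⟩, hEA⟩

lemma IsBoxClassTree.exists_isMaxBoxClassTree_superset [Finite G] {H : Set G}
    (hT : IsBoxClassTree I H T) : ∃ T', T ⊆ T' ∧ IsMaxBoxClassTree I H T' := by
  obtain ⟨T', hTT', hT'⟩ := (toFinite {U | IsBoxClassTree I H U}).exists_le_maximal hT
  exact ⟨T', hTT', hT'.1, fun U hU hT'U => (hT'.2 hU hT'U).antisymm hT'U⟩

end Context

theorem maxBoxClassTree_iff_maxCompleteExtClassTree_general
    [Fintype G] (I : G → M → Prop)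
    (hempty : cl2 I Set.univ (∅ : Set G) = ∅)
    (T : Set (Set G)) (hT : ∀ E ∈ T, E.Nonempty ∧ IsBoxExtent I Set.univ E) :
    IsMaxBoxClassTree I Set.univ T ↔
      (IsCompleteExtClassTree I T ∧
        ∀ T' : Set (Set G), IsCompleteExtClassTree I T' → T ⊆ T' → T' = T) := by
  constructor
  · intro hmax
    refine ⟨hmax.isCompleteExtClassTree hempty, fun T' hT' hTT' => hmax.2 T' ?_ hTT'⟩
    exact hT'.1.isBoxClassTree fun _ => hT'.isBoxExtent
  · rintro ⟨hcomplete, hmax⟩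
    refine ⟨hcomplete.1.isBoxClassTree fun E hE => (hT E hE).2, fun T' hT' hTT' => ?_⟩
    obtain ⟨T'', hT'T'', hT''⟩ := hT'.exists_isMaxBoxClassTree_superset
    have hT''T : T'' = T := hmax T'' (hT''.isCompleteExtClassTree hempty) (hTT'.trans hT'T'')
    exact subset_antisymm (hT''T ▸ hT'T'') hTT'

/-- A set `T` of nonempty box extents is a maximal classification tree in the box extent
lattice `B(G,M,I)` iff it is a maximal complete classification tree in the lattice of
extents of `(G,M,I)`. -/
theorem maxBoxClassTree_iff_maxCompleteExtClassTree
    [Fintype G] [Fintype M] (I : G → M → Prop)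
    (hempty : cl2 I Set.univ (∅ : Set G) = ∅)
    (T : Set (Set G)) (hT : ∀ E ∈ T, E.Nonempty ∧ IsBoxExtent I Set.univ E) :
    IsMaxBoxClassTree I Set.univ T ↔
      (IsCompleteExtClassTree I T ∧
        ∀ T' : Set (Set G), IsCompleteExtClassTree I T' → T ⊆ T' → T' = T) :=
  maxBoxClassTree_iff_maxCompleteExtClassTree_general I hempty T hT
end

section
/- Let (G,M,I) be a finite context with ∅'' = ∅, let z ∈ G and H = G ∖ {z}, let π□ be the finest extent partition of (G,M,I), and let z^□□ be the class of π□ containing z. If E is a box extent of (G,M,I), then either (1) E is a box extent of the subcontext (H, M, I ∩ (H×M)) with E ∩ z^□□ = ∅, or (2) E ∖ {z} is a box extent of the subcontext (H, M, I ∩ (H×M)). -/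
open Set

variable {G M : Type*}

/-
Restricting to a smaller object set `H' ⊆ H` only intersects closures with `H'`, so for an
extent `A` of `H` the closure of `A ∩ H'` in `H'` is squeezed between `A ∩ H'` and
`A'' ∩ H' = A ∩ H'`. Hence the nonempty traces on `H'` of the classes of an extent partition
form an extent partition of the subcontext, and `E ∖ {z}` is a box extent of `G ∖ {z}`
for every box extent `E` of `G`. A class `E = {z}` leaves the empty trace, which is `∅''`
in the subcontext because every object of `∅''` lies in `{z}'' = {z}`.
-/

section Restrict

variable {I : G → M → Prop} {H H' : Set G}

lemma cl2_mono {A B : Set G} (h : A ⊆ B) : cl2 I H A ⊆ cl2 I H B :=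
  fun _ hg => ⟨hg.1, fun m hm => hg.2 m fun x hx => hm x (h hx)⟩

lemma subset_cl2 {A : Set G} (h : A ⊆ H) : A ⊆ cl2 I H A :=
  fun g hg => ⟨h hg, fun _ hm => hm g hg⟩

lemma cl2_of_subset (hH : H' ⊆ H) (A : Set G) : cl2 I H' A = cl2 I H A ∩ H' := by
  ext g
  exact ⟨fun hg => ⟨⟨hH hg.1, hg.2⟩, hg.1⟩, fun hg => ⟨hg.2, hg.1.2⟩⟩

lemma IsExtent.inter {A : Set G} (hA : IsExtent I H A) (hH : H' ⊆ H) :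
    IsExtent I H' (A ∩ H') := by
  refine ⟨inter_subset_right, (subset_cl2 inter_subset_right).antisymm' ?_⟩
  calc cl2 I H' (A ∩ H') ⊆ cl2 I H' A := cl2_mono inter_subset_left
    _ = A ∩ H' := by rw [cl2_of_subset hH, hA.2]

lemma IsExtentPartition.inter {σ : Set (Set G)} (hσ : IsExtentPartition I H σ)
    (hH : H' ⊆ H) : IsExtentPartition I H' ((· ∩ H') '' σ \ {∅}) := by
  obtain ⟨-, hdisj, hcover, hext⟩ := hσ
  refine ⟨fun X hX => nonempty_iff_ne_empty.2 hX.2, ?_, ?_, ?_⟩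
  · rintro _ ⟨⟨A, hA, rfl⟩, -⟩ _ ⟨⟨B, hB, rfl⟩, -⟩ hAB
    exact (hdisj hA hB fun h => hAB (h ▸ rfl)).mono inter_subset_left inter_subset_left
  · refine (sUnion_subset ?_).antisymm fun g hg => ?_
    · rintro _ ⟨⟨A, -, rfl⟩, -⟩
      exact inter_subset_right
    · obtain ⟨A, hA, hgA⟩ : g ∈ ⋃₀ σ := hcover ▸ hH hg
      exact ⟨A ∩ H', ⟨⟨A, hA, rfl⟩, nonempty_iff_ne_empty.1 ⟨g, hgA, hg⟩⟩, hgA, hg⟩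
  · rintro _ ⟨⟨A, hA, rfl⟩, -⟩
    exact (hext A hA).inter hH

lemma IsBoxExtent.inter {E : Set G} (hE : IsBoxExtent I H E) (hH : H' ⊆ H) :
    IsBoxExtent I H' (E ∩ H') := by
  rcases hE with ⟨σ, hσ, hEσ⟩ | rfl
  · rcases eq_or_ne (E ∩ H') ∅ with hEH | hEH
    · refine Or.inr (hEH.trans (subset_empty_iff.1 ?_).symm)
      calc cl2 I H' ∅ = cl2 I H ∅ ∩ H' := cl2_of_subset hH ∅
        _ ⊆ cl2 I H E ∩ H' := inter_subset_inter_left _ (cl2_mono (empty_subset E))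
        _ = ∅ := by rw [(hσ.2.2.2 E hEσ).2, hEH]
    · exact Or.inl ⟨_, hσ.inter hH, ⟨E, hEσ, rfl⟩, hEH⟩
  · exact Or.inr (cl2_of_subset hH ∅).symm

end Restrict

theorem boxExtent_one_object_reduction_general
    (I : G → M → Prop)
    (z : G)
    (Z : Set G)
    (E : Set G) (hE : IsBoxExtent I Set.univ E) :
    (IsBoxExtent I (Set.univ \ {z}) E ∧ E ∩ Z = ∅) ∨
      IsBoxExtent I (Set.univ \ {z}) (E \ {z}) := by
  right
  simpa only [← inter_sdiff_assoc, inter_univ] using hE.inter (subset_univ (Set.univ \ {z}))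

/-- If `E` is a box extent of `(G,M,I)` (with `∅'' = ∅`) and `H = G ∖ {z}`, then either
`E` is a box extent of the subcontext disjoint from `z^□□`, or `E ∖ {z}` is a box extent
of the subcontext. -/
theorem boxExtent_one_object_reduction
    [Fintype G] [Fintype M] (I : G → M → Prop)
    (hempty : cl2 I Set.univ (∅ : Set G) = ∅)
    (z : G) (π : Set (Set G)) (hπ : IsFinestExtentPartition I Set.univ π)
    (Z : Set G) (hZ : Z ∈ π) (hzZ : z ∈ Z)
    (E : Set G) (hE : IsBoxExtent I Set.univ E) :
    (IsBoxExtent I (Set.univ \ {z}) E ∧ E ∩ Z = ∅) ∨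
      IsBoxExtent I (Set.univ \ {z}) (E \ {z}) :=
  boxExtent_one_object_reduction_general I z Z E hE
end
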